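/- arXiv:1109.3636 — 2 statements merged into one kernel-verified Lean document; each statement's English description precedes it below -/
import Mathlib

section
/- Let d ≥ 1, k ≥ 1, let q₁, …, q_k be real polynomials of degree at most d with q_i(0) = 0, and let ε₁, …, ε_k > 0. Then there exist a measure-preserving system (X, 𝒳, μ, T) and a measurable set B ⊆ X with μ(B) > 0 such that {n ∈ ℤ : μ(B ∩ T^{−n}B ∩ T^{−2n}B ∩ ⋯ ∩ T^{−dn}B) > 0} ⊆ ⋂_{i=1}^k {n ∈ ℤ : ‖q_i(n)‖ < ε_i}. -/
open MeasureTheory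

/-- `‖a‖`: the distance from a real number `a` to the nearest integer. -/
noncomputable def distToInt (a : ℝ) : ℝ := sInf (Set.range fun m : ℤ => |a - (m : ℝ)|)

/-!
For a monomial `c n^(j+1)`, apply the skew product construction `(x, s) ↦ (T x, s + f x)` over
the circle `j + 1` times to the one-point system. Along every orbit the last coordinate `u`
satisfies `Δ₁^(j+1) u ≡ c`, hence `Δₙ^(j+1) u ≡ n^(j+1) c`. If `T^(i n) x` lies in
`B = {‖s‖ < δ / 2^(j+1)}` for all `i ≤ j + 1`, then `‖c n^(j+1)‖ < δ`, because `Δₙ^(j+1) u (0)`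
is a signed sum of the values `u (i n)` with binomial coefficients of total size `2^(j+1)`. A polynomial vanishing at `0` is a sum of such monomials, and finitely
many such constraints are met at once by the product of the corresponding systems.
-/

open Finset Function AddCircle Polynomial
open scoped fwdDiff

theorem distToInt_eq_norm (x : ℝ) : distToInt x = ‖(x : UnitAddCircle)‖ := by
  rw [UnitAddCircle.norm_eq]
  refine IsLeast.csInf_eq ⟨⟨round x, rfl⟩, ?_⟩
  rintro _ ⟨m, rfl⟩
  exact round_le x m

theorem distToInt_sum_le {ι : Type*} (s : Finset ι) (g : ι → ℝ) :
    distToInt (∑ i ∈ s, g i) ≤ ∑ i ∈ s, distToInt (g i) :=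
  le_sum_of_subadditive distToInt (by simp [distToInt_eq_norm])
    (fun x y => by simpa only [distToInt_eq_norm, AddCircle.coe_add] using norm_add_le _ _) s g

section ForwardDifference

theorem fwdDiff_comm {M G : Type*} [AddCommMonoid M] [AddCommGroup G] (m n : M) :
    Function.Commute (fwdDiff m : (M → G) → M → G) (fwdDiff n) := by
  intro f
  funext t
  simp only [fwdDiff, add_right_comm t m n]
  abel

variable {G : Type*} [AddCommGroup G]

theorem fwdDiff_int_eq_zsmul {w : ℤ → G} {a : G} (h : ∀ t, Δ_[1] w t = a) (n t : ℤ) :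
    Δ_[n] w t = n • a := by
  induction n using Int.induction_on with
  | zero => simp [fwdDiff]
  | succ n ih =>
    have := h (t + n)
    simp only [fwdDiff] at this ih ⊢
    rw [add_smul, one_smul, ← ih, ← this, ← add_assoc]
    abel
  | pred n ih =>
    have := h (t + (-n - 1))
    simp only [fwdDiff] at this ih ⊢
    rw [sub_smul, one_smul, ← ih, ← this, show t + (-n - 1) + 1 = t + -n by ring]
    abel

theorem fwdDiff_iter_int_eq_pow_zsmul {j : ℕ} {u : ℤ → G} {a : G}
    (h : ∀ t, Δ_[1] ^[j] u t = a) (n t : ℤ) : Δ_[n] ^[j] u t = n ^ j • a := by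
  induction j generalizing u a with
  | zero => simpa using h t
  | succ j ih =>
    have hstep : ∀ t, Δ_[1] ^[j] (Δ_[n] u) t = n • a := by
      intro t
      rw [(fwdDiff_comm 1 n).iterate_left j u]
      exact fwdDiff_int_eq_zsmul (fun s => by rw [← iterate_succ_apply' (Δ_[1])]; exact h s) n t
    rw [iterate_succ_apply, ih hstep, pow_succ, mul_smul]

theorem norm_fwdDiff_iter_lt {M E : Type*} [AddCommMonoid M] [SeminormedAddCommGroup E]
    (h : M) (j : ℕ) (u : M → E) {δ : ℝ} (hu : ∀ i ≤ j, ‖u (i • h)‖ < δ) :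
    ‖Δ_[h] ^[j] u 0‖ < 2 ^ j * δ := by
  induction j generalizing u δ with
  | zero => simpa using hu 0 le_rfl
  | succ j ih =>
    rw [iterate_succ_apply, pow_succ, mul_assoc]
    refine ih _ fun i hi => ?_
    calc ‖Δ_[h] u (i • h)‖ ≤ ‖u ((i + 1) • h)‖ + ‖u (i • h)‖ := by
          rw [fwdDiff, ← succ_nsmul]; exact norm_sub_le _ _
      _ < 2 * δ := by linarith [hu (i + 1) (by omega), hu i (by omega)]

end ForwardDifference

theorem Function.Semiconj.perm_zpow {α β : Type*} {g : α → β} {e : Equiv.Perm α}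
    {e' : Equiv.Perm β} (h : Semiconj g e e') (t : ℤ) : Semiconj g ⇑(e ^ t) ⇑(e' ^ t) := by
  have hinv : Semiconj g ⇑e⁻¹ ⇑e'⁻¹ := h.inverses_right e.apply_symm_apply e'.symm_apply_apply
  cases t with
  | ofNat n => simpa only [Int.ofNat_eq_natCast, zpow_natCast, Equiv.Perm.coe_pow] using
      h.iterate_right n
  | negSucc n => simpa only [zpow_negSucc, ← inv_pow, Equiv.Perm.coe_pow] using
      hinv.iterate_right (n + 1)

theorem MeasureTheory.MeasurePreserving.skew_product_add_right {α G : Type*}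
    [MeasurableSpace α] [AddGroup G] [MeasurableSpace G] [MeasurableAdd₂ G] {μ : Measure α}
    {ν : Measure G} [SFinite μ] [SFinite ν] [ν.IsAddRightInvariant] {T : α → α}
    (hT : MeasurePreserving T μ μ) {f : α → G} (hf : Measurable f) :
    MeasurePreserving (fun p : α × G => (T p.1, p.2 + f p.1)) (μ.prod ν) (μ.prod ν) :=
  hT.skew_product (measurable_snd.add (hf.comp measurable_fst))
    (Filter.Eventually.of_forall fun x => (measurePreserving_add_right ν (f x)).map_eq)

namespace Equiv.Perm

variable {α β : Type*}

theorem prodCongr_zpow_apply (e : Perm α) (e' : Perm β) (t : ℤ) (p : α × β) :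
    (e.prodCongr e' ^ t) p = ((e ^ t) p.1, (e' ^ t) p.2) :=
  Prod.ext (Semiconj.perm_zpow (g := Prod.fst) (fun _ => rfl) t p)
    (Semiconj.perm_zpow (g := Prod.snd) (fun _ => rfl) t p)

theorem prodShear_zpow_apply_fst (e : Perm α) (g : α → Perm β) (t : ℤ) (p : α × β) :
    (((e.prodShear g : Perm (α × β)) ^ t) p).1 = (e ^ t) p.1 :=
  Semiconj.perm_zpow (g := Prod.fst) (fun _ => rfl) t p

end Equiv.Perm

structure InvertibleMPS where
  X : Type
  [measurableSpace : MeasurableSpace X]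
  μ : Measure X
  [isProbabilityMeasure : IsProbabilityMeasure μ]
  T : Equiv.Perm X
  measurePreserving : MeasurePreserving T μ μ
  measurePreserving_symm : MeasurePreserving T.symm μ μ

namespace InvertibleMPS

attribute [instance] measurableSpace isProbabilityMeasure

noncomputable abbrev unit : InvertibleMPS where
  X := Unit
  μ := Measure.dirac ()
  T := 1
  measurePreserving := MeasurePreserving.id _
  measurePreserving_symm := MeasurePreserving.id _

noncomputable abbrev prod (S S' : InvertibleMPS) : InvertibleMPS where
  X := S.X × S'.X
  μ := S.μ.prod S'.μ
  T := S.T.prodCongr S'.T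
  measurePreserving := S.measurePreserving.prod S'.measurePreserving
  measurePreserving_symm := S.measurePreserving_symm.prod S'.measurePreserving_symm

noncomputable abbrev skew (S : InvertibleMPS) (f : S.X → UnitAddCircle) (hf : Measurable f) :
    InvertibleMPS where
  X := S.X × UnitAddCircle
  μ := S.μ.prod haarAddCircle
  T := S.T.prodShear fun x => Equiv.addRight (f x)
  measurePreserving := S.measurePreserving.skew_product_add_right hf
  measurePreserving_symm := by
    simpa [Equiv.prodShear, sub_eq_add_neg] using
      S.measurePreserving_symm.skew_product_add_right
        (hf.comp S.measurePreserving_symm.measurable).neg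

theorem fwdDiff_skew_orbit_snd (S : InvertibleMPS) {f : S.X → UnitAddCircle}
    (hf : Measurable f) (p : S.X × UnitAddCircle) :
    Δ_[1] (fun t : ℤ => (((S.skew f hf).T ^ t) p).2) = fun t => f ((S.T ^ t) p.1) := by
  funext t
  rw [fwdDiff, add_comm t 1, zpow_add, zpow_one, Equiv.Perm.mul_apply]
  change (((S.skew f hf).T ^ t) p).2 + f (((S.skew f hf).T ^ t) p).1 - _ = _
  rw [add_sub_cancel_left, Equiv.Perm.prodShear_zpow_apply_fst]

def multipleReturnTimes (S : InvertibleMPS) (d : ℕ) (B : Set S.X) : Set ℤ :=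
  {n | ∃ x, ∀ i ≤ d, (S.T ^ ((i : ℤ) * n)) x ∈ B}

theorem prod_multipleReturnTimes_subset (S S' : InvertibleMPS) (d : ℕ) (B : Set S.X)
    (C : Set S'.X) :
    (S.prod S').multipleReturnTimes d (B ×ˢ C) ⊆
      S.multipleReturnTimes d B ∩ S'.multipleReturnTimes d C := by
  rintro n ⟨p, hp⟩
  simp only [Equiv.Perm.prodCongr_zpow_apply, Set.mem_prod] at hp
  exact ⟨⟨p.1, fun i hi => (hp i hi).1⟩, ⟨p.2, fun i hi => (hp i hi).2⟩⟩

end InvertibleMPS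

def ContainsMultipleReturnTimes (d : ℕ) (P : Set ℤ) : Prop :=
  ∃ (S : InvertibleMPS) (B : Set S.X), MeasurableSet B ∧ 0 < S.μ B ∧
    S.multipleReturnTimes d B ⊆ P

namespace ContainsMultipleReturnTimes

variable {d : ℕ} {P Q : Set ℤ}

theorem mono (hP : ContainsMultipleReturnTimes d P) (hPQ : P ⊆ Q) :
    ContainsMultipleReturnTimes d Q :=
  let ⟨S, B, hB, hμB, hsub⟩ := hP
  ⟨S, B, hB, hμB, hsub.trans hPQ⟩

theorem univ (d : ℕ) : ContainsMultipleReturnTimes d Set.univ :=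
  ⟨InvertibleMPS.unit, Set.univ, MeasurableSet.univ, by simp, Set.subset_univ _⟩

theorem inter (hP : ContainsMultipleReturnTimes d P) (hQ : ContainsMultipleReturnTimes d Q) :
    ContainsMultipleReturnTimes d (P ∩ Q) := by
  obtain ⟨S, B, hB, hμB, hBP⟩ := hP
  obtain ⟨S', C, hC, hμC, hCQ⟩ := hQ
  refine ⟨S.prod S', B ×ˢ C, hB.prod hC, ?_,
    (S.prod_multipleReturnTimes_subset S' d B C).trans (Set.inter_subset_inter hBP hCQ)⟩
  rw [Measure.prod_prod]
  exact ENNReal.mul_pos hμB.ne' hμC.ne'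

theorem biInter {ι : Type*} (s : Finset ι) {P : ι → Set ℤ}
    (h : ∀ i ∈ s, ContainsMultipleReturnTimes d (P i)) :
    ContainsMultipleReturnTimes d (⋂ i ∈ s, P i) := by
  classical
  induction s using Finset.induction_on with
  | empty => simpa using univ d
  | insert a s _ ih =>
    rw [Finset.set_biInter_insert]
    exact (h a (mem_insert_self a s)).inter (ih fun i hi => h i (mem_insert_of_mem hi))

end ContainsMultipleReturnTimes

theorem exists_orbit_fwdDiff_iter_eq (j : ℕ) (a : UnitAddCircle) :
    ∃ (S : InvertibleMPS) (f : S.X → UnitAddCircle), Measurable f ∧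
      ∀ x t, Δ_[1] ^[j] (fun s : ℤ => f ((S.T ^ s) x)) t = a := by
  induction j with
  | zero => exact ⟨InvertibleMPS.unit, fun _ => a, measurable_const, fun _ _ => rfl⟩
  | succ j ih =>
    obtain ⟨S, f, hf, horbit⟩ := ih
    refine ⟨S.skew f hf, Prod.snd, measurable_snd, fun p t => ?_⟩
    rw [iterate_succ_apply, S.fwdDiff_skew_orbit_snd hf]
    exact horbit p.1 t

theorem containsMultipleReturnTimes_monomial {d j : ℕ} (hj : j < d) (c : ℝ) {δ : ℝ}
    (hδ : 0 < δ) :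
    ContainsMultipleReturnTimes d {n : ℤ | distToInt (c * (n : ℝ) ^ (j + 1)) < δ} := by
  obtain ⟨S, f, hf, horbit⟩ := exists_orbit_fwdDiff_iter_eq j c
  set r := δ / 2 ^ (j + 1)
  refine ⟨S.skew f hf, Set.univ ×ˢ Metric.ball 0 r,
    MeasurableSet.univ.prod Metric.isOpen_ball.measurableSet, ?_, ?_⟩
  · simpa [InvertibleMPS.skew, Measure.prod_prod] using
      Metric.isOpen_ball.measure_pos (haarAddCircle : Measure UnitAddCircle)
        ⟨0, Metric.mem_ball_self (by positivity)⟩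
  · rintro n ⟨p, hp⟩
    set u := fun s : ℤ => (((S.skew f hf).T ^ s) p).2
    have hdiff : Δ_[n] ^[j + 1] u 0 = n ^ (j + 1) • (c : UnitAddCircle) :=
      fwdDiff_iter_int_eq_pow_zsmul (fun t => by
        rw [iterate_succ_apply, S.fwdDiff_skew_orbit_snd hf]; exact horbit p.1 t) n 0
    have hsmall := norm_fwdDiff_iter_lt n (j + 1) u fun i hi => by
      simpa [u, nsmul_eq_mul] using (hp i (by omega)).2
    rw [hdiff] at hsmall
    have hcoe : ((c * (n : ℝ) ^ (j + 1) : ℝ) : UnitAddCircle) =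
        n ^ (j + 1) • (c : UnitAddCircle) := by
      rw [← AddCircle.coe_zsmul, zsmul_eq_mul, mul_comm]; push_cast; rfl
    calc distToInt (c * (n : ℝ) ^ (j + 1)) < 2 ^ (j + 1) * r := by
          rwa [distToInt_eq_norm, hcoe]
      _ = δ := mul_div_cancel₀ _ (by positivity)

theorem containsMultipleReturnTimes_polynomial {d : ℕ} {p : ℝ[X]} (hdeg : p.natDegree ≤ d)
    (h0 : p.eval 0 = 0) {ε : ℝ} (hε : 0 < ε) :
    ContainsMultipleReturnTimes d {n : ℤ | distToInt (p.eval (n : ℝ)) < ε} := by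
  have hδ : 0 < ε / (d + 1) := by positivity
  refine (ContainsMultipleReturnTimes.biInter (range d) fun j hj =>
    containsMultipleReturnTimes_monomial (mem_range.1 hj) (p.coeff (j + 1)) hδ).mono ?_
  intro n hn
  simp only [Set.mem_iInter₂, Set.mem_ofPred_eq] at hn ⊢
  have heval : p.eval (n : ℝ) = ∑ j ∈ range d, p.coeff (j + 1) * (n : ℝ) ^ (j + 1) := by
    rw [eval_eq_sum_range' (Nat.lt_succ_of_le hdeg), sum_range_succ', coeff_zero_eq_eval_zero,
      h0, zero_mul, add_zero]
  calc distToInt (p.eval (n : ℝ))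
      ≤ ∑ j ∈ range d, distToInt (p.coeff (j + 1) * (n : ℝ) ^ (j + 1)) :=
        heval ▸ distToInt_sum_le _ _
    _ ≤ ∑ _j ∈ range d, ε / (d + 1) := sum_le_sum fun j hj => (hn j hj).le
    _ = d / (d + 1) * ε := by rw [sum_const, card_range, nsmul_eq_mul]; ring
    _ < ε := mul_lt_of_lt_one_left hε ((div_lt_one (by positivity)).2 (by linarith))

theorem stmt_10_general (d : ℕ) (k : ℕ)
    (q : Fin k → Polynomial ℝ) (hdeg : ∀ i, (q i).natDegree ≤ d)
    (hq0 : ∀ i, (q i).eval 0 = 0) (ε : Fin k → ℝ) (hε : ∀ i, 0 < ε i) :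
    ∃ (X : Type) (_ : MeasurableSpace X) (μ : Measure X)
      (_ : IsProbabilityMeasure μ) (T : Equiv.Perm X),
      Measurable (⇑T) ∧ Measurable (⇑T.symm) ∧
      MeasurePreserving (⇑T) μ μ ∧ MeasurePreserving (⇑T.symm) μ μ ∧
      ∃ B : Set X, MeasurableSet B ∧ 0 < μ B ∧
        ∀ n : ℤ,
          0 < μ (⋂ i ∈ Finset.range (d + 1), (⇑(T ^ ((i : ℤ) * n)))⁻¹' B) →
          ∀ i, distToInt ((q i).eval (n : ℝ)) < ε i := by
  obtain ⟨S, B, hB, hμB, hreturn⟩ := ContainsMultipleReturnTimes.biInter univ fun i _ =>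
    containsMultipleReturnTimes_polynomial (hdeg i) (hq0 i) (hε i)
  refine ⟨S.X, S.measurableSpace, S.μ, S.isProbabilityMeasure, S.T,
    S.measurePreserving.measurable, S.measurePreserving_symm.measurable, S.measurePreserving,
    S.measurePreserving_symm, B, hB, hμB, fun n hn i => ?_⟩
  obtain ⟨x, hx⟩ := nonempty_of_measure_ne_zero hn.ne'
  have hn' : n ∈ S.multipleReturnTimes d B :=
    ⟨x, fun j hj => by simpa using Set.mem_iInter₂.1 hx j (mem_range.2 (Nat.lt_succ_of_le hj))⟩
  exact Set.mem_iInter₂.1 (hreturn hn') i (mem_univ i)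

theorem stmt_10 (d : ℕ) (hd : 1 ≤ d) (k : ℕ) (hk : 1 ≤ k)
    (q : Fin k → Polynomial ℝ) (hdeg : ∀ i, (q i).natDegree ≤ d)
    (hq0 : ∀ i, (q i).eval 0 = 0) (ε : Fin k → ℝ) (hε : ∀ i, 0 < ε i) :
    ∃ (X : Type) (_ : MeasurableSpace X) (μ : Measure X)
      (_ : IsProbabilityMeasure μ) (T : Equiv.Perm X),
      Measurable (⇑T) ∧ Measurable (⇑T.symm) ∧
      MeasurePreserving (⇑T) μ μ ∧ MeasurePreserving (⇑T.symm) μ μ ∧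
      ∃ B : Set X, MeasurableSet B ∧ 0 < μ B ∧
        ∀ n : ℤ,
          0 < μ (⋂ i ∈ Finset.range (d + 1), (⇑(T ^ ((i : ℤ) * n)))⁻¹' B) →
          ∀ i, distToInt ((q i).eval (n : ℝ)) < ε i :=
  stmt_10_general d k q hdeg hq0 ε hε
end

section
/- Let d ≥ 2 and assume that F_{GP_{d−1}} ⊆ F_{SGP_{d−1}}. If p, q ∈ GP_d and p ≃_d q, then p ∈ GP'_d if and only if q ∈ GP'_d. -/
/-- `⌈a⌉`: the least integer `m` with `|a − m| = ‖a‖`. -/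
noncomputable def nint (a : ℝ) : ℤ := sInf { m : ℤ | |a - (m : ℝ)| = distToInt a }

/-- The class `GP d` of generalized polynomials `ℤ → ℝ` of degree `≤ d`:
`GP 1` is generated by the maps `n ↦ a·n`; each `GP d` contains `GP e` for `e < d` and
the functions `n ↦ a₀ n^{p₀} ⌈f₁(n)⌉⋯⌈f_k(n)⌉` with `f_l ∈ GP (p l)` and
`p₀ + Σ p_l = d`; and each `GP d` is closed under `⌈·⌉`, scalar multiples and sums.
(No constructor produces `GP 0`, so the degrees `p l` are automatically `≥ 1`.) -/
inductive GP : ℕ → (ℤ → ℝ) → Prop where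
  | base (a : ℝ) : GP 1 (fun n => a * (n : ℝ))
  | incl {d e : ℕ} {f : ℤ → ℝ} (hf : GP e f) (hed : e < d) : GP d f
  | mono {d : ℕ} (a₀ : ℝ) (p₀ k : ℕ) (p : Fin k → ℕ) (f : Fin k → ℤ → ℝ)
      (hf : ∀ l, GP (p l) (f l)) (hsum : p₀ + ∑ l, p l = d) (hd : 1 ≤ d) :
      GP d (fun n => a₀ * (n : ℝ) ^ p₀ * ∏ l, (nint (f l n) : ℝ))
  | ceil {d : ℕ} {f : ℤ → ℝ} (hf : GP d f) : GP d (fun n => (nint (f n) : ℝ))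
  | smul {d : ℕ} {f : ℤ → ℝ} (c : ℝ) (hf : GP d f) : GP d (fun n => c * f n)
  | add {d : ℕ} {f g : ℤ → ℝ} (hf : GP d f) (hg : GP d g) : GP d (fun n => f n + g n)

/-- `L(a₁,…,a_ℓ)`: `L(a₁) = a₁` and `L(a₁,a₂,…,a_ℓ) = a₁⌈L(a₂,…,a_ℓ)⌉`. -/
noncomputable def Lfun : List ℝ → ℝ
  | [] => 0
  | [a] => a
  | a :: b :: rest => a * (nint (Lfun (b :: rest)) : ℝ)

/-- The class `SGP d` of special generalized polynomials of degree `≤ d`: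
the functions `n ↦ L(n^{j₁}a₁,…,n^{j_ℓ}a_ℓ)` with `1 ≤ ℓ ≤ d`, `j_t ≥ 1`, `Σ j_t ≤ d`. -/
def SGP (d : ℕ) (f : ℤ → ℝ) : Prop :=
  ∃ (ℓ : ℕ) (a : Fin ℓ → ℝ) (j : Fin ℓ → ℕ),
    1 ≤ ℓ ∧ ℓ ≤ d ∧ (∀ t, 1 ≤ j t) ∧ (∑ t, j t) ≤ d ∧
    f = fun n : ℤ => Lfun (List.ofFn fun t => (n : ℝ) ^ (j t) * a t)

/-- The family `F_{GP_d}` of subsets of `ℤ` containing some set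
`⋂_{i=1}^k {n : ‖P_i(n)‖ < ε_i}` with `P_i ∈ GP d` and `ε_i > 0`. -/
def FGP (d : ℕ) : Set (Set ℤ) :=
  { A | ∃ (k : ℕ) (P : Fin k → ℤ → ℝ) (ε : Fin k → ℝ),
      1 ≤ k ∧ (∀ i, GP d (P i)) ∧ (∀ i, 0 < ε i) ∧
      (⋂ i, { n : ℤ | distToInt (P i n) < ε i }) ⊆ A }

/-- The family `F_{SGP_d}`, defined like `F_{GP_d}` with `SGP d` in place of `GP d`. -/
def FSGP (d : ℕ) : Set (Set ℤ) :=
  { A | ∃ (k : ℕ) (P : Fin k → ℤ → ℝ) (ε : Fin k → ℝ),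
      1 ≤ k ∧ (∀ i, SGP d (P i)) ∧ (∀ i, 0 < ε i) ∧
      (⋂ i, { n : ℤ | distToInt (P i n) < ε i }) ⊆ A }

/-- `SW d`: the functions `n ↦ ∏_{i=1}^ℓ (w_i(n) − ⌈w_i(n)⌉)` with `ℓ ≥ 2`, `r_i ≥ 1`,
`w_i ∈ GP (r i)` and `r₁+⋯+r_ℓ ≤ d`. -/
def SW (d : ℕ) (g : ℤ → ℝ) : Prop :=
  ∃ (ℓ : ℕ) (r : Fin ℓ → ℕ) (w : Fin ℓ → ℤ → ℝ),
    2 ≤ ℓ ∧ (∀ i, 1 ≤ r i) ∧ (∀ i, GP (r i) (w i)) ∧ (∑ i, r i) ≤ d ∧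
    g = fun n : ℤ => ∏ i, (w i n - (nint (w i n) : ℝ))

/-- `W d`: finite real linear combinations of functions in `SW d`. -/
def Wset (d : ℕ) : Set (ℤ → ℝ) :=
  { p | ∃ (m : ℕ) (c : Fin m → ℝ) (g : Fin m → ℤ → ℝ),
      1 ≤ m ∧ (∀ j, SW d (g j)) ∧ p = fun n : ℤ => ∑ j, c j * g j n }

/-- `q₁ ≃_d q₂`: there exist `h₁ ∈ GP (d−1)` and `h₂ ∈ W d` with
`q₂(n) − q₁(n) − h₁(n) − h₂(n) ∈ ℤ` for every `n`. -/
def GPequiv (d : ℕ) (q₁ q₂ : ℤ → ℝ) : Prop :=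
  ∃ h₁ h₂ : ℤ → ℝ, GP (d - 1) h₁ ∧ h₂ ∈ Wset d ∧
    ∀ n : ℤ, ∃ m : ℤ, q₂ n - q₁ n - h₁ n - h₂ n = (m : ℝ)

/-- `GP'_d = {p ∈ GP d : ∀ ε > 0, {n : ‖p(n)‖ < ε} ∈ F_{SGP_d}}`. -/
def GP' (d : ℕ) : Set (ℤ → ℝ) :=
  { p | GP d p ∧ ∀ ε : ℝ, 0 < ε → { n : ℤ | distToInt (p n) < ε } ∈ FSGP d }

/-! `‖·‖` is subadditive and invariant under integer shifts, so `p ≃_d q` gives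
`‖q(n)‖ ≤ ‖p(n)‖ + ‖h₁(n)‖ + |h₂(n)|`. The set where `‖h₁‖` is small lies in
`F_{GP_{d-1}} ⊆ F_{SGP_{d-1}}`. A product in `W_d` has at least two factors of positive degree,
so each factor `w_i` has degree `≤ d - 1`, and the product is small as soon as every `‖w_i‖` is;
hence the set where `|h₂|` is small lies in `F_{GP_{d-1}}` as well. Since these families are closed
under finite intersections and supersets, `{n : ‖q(n)‖ < ε} ∈ F_{SGP_d}`; the converse follows
from the symmetry of `≃_d`. -/

open Finset Set

lemma distToInt_le (a : ℝ) (m : ℤ) : distToInt a ≤ |a - m| :=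
  csInf_le ⟨0, by rintro x ⟨k, rfl⟩; positivity⟩ ⟨m, rfl⟩

lemma distToInt_eq_abs_sub_round (a : ℝ) : distToInt a = |a - round a| :=
  le_antisymm (distToInt_le a _)
    (le_csInf ⟨_, round a, rfl⟩ (by rintro _ ⟨m, rfl⟩; exact round_le a m))

lemma distToInt_add_intCast (a : ℝ) (m : ℤ) : distToInt (a + m) = distToInt a := by
  simp only [distToInt_eq_abs_sub_round, round_add_intCast, Int.cast_add, add_sub_add_right_eq_sub]

lemma distToInt_add_le (a b : ℝ) : distToInt (a + b) ≤ distToInt a + distToInt b := by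
  rw [distToInt_eq_abs_sub_round a, distToInt_eq_abs_sub_round b]
  calc distToInt (a + b) ≤ |a + b - ↑(round a + round b)| := distToInt_le _ _
    _ = |(a - round a) + (b - round b)| := by push_cast; ring_nf
    _ ≤ |a - round a| + |b - round b| := abs_add_le _ _

lemma distToInt_le_abs (a : ℝ) : distToInt a ≤ |a| := by
  simpa using distToInt_le a 0

lemma abs_sub_nint (a : ℝ) : |a - nint a| = distToInt a := by
  refine Int.csInf_mem (s := { m : ℤ | |a - m| = distToInt a }) ⟨round a, (distToInt_eq_abs_sub_round a).symm⟩ ⟨⌊a⌋ - 1, fun m hm => ?_⟩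
  have hm : |a - m| ≤ 1 / 2 :=
    ((hm : |a - m| = distToInt a).trans (distToInt_eq_abs_sub_round a)).trans_le (abs_sub_round a)
  have := Int.floor_le a
  have : (⌊a⌋ : ℝ) - 1 ≤ m := by linarith [(abs_le.mp hm).2]
  exact_mod_cast this

lemma GP.of_le {e d : ℕ} {f : ℤ → ℝ} (h : GP e f) (hed : e ≤ d) : GP d f :=
  hed.eq_or_lt.elim (fun hed => hed ▸ h) (GP.incl h)

lemma SGP.of_le {e d : ℕ} {f : ℤ → ℝ} (h : SGP e f) (hed : e ≤ d) : SGP d f :=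
  let ⟨ℓ, a, j, hℓ, hℓe, hj, hje, hf⟩ := h
  ⟨ℓ, a, j, hℓ, hℓe.trans hed, hj, hje.trans hed, hf⟩

/-- `FGP d` and `FSGP d` are `distToIntSets (GP d)` and `distToIntSets (SGP d)` by definition. -/
def distToIntSets (C : (ℤ → ℝ) → Prop) : Set (Set ℤ) :=
  { A | ∃ (k : ℕ) (P : Fin k → ℤ → ℝ) (ε : Fin k → ℝ),
      1 ≤ k ∧ (∀ i, C (P i)) ∧ (∀ i, 0 < ε i) ∧
      (⋂ i, { n : ℤ | distToInt (P i n) < ε i }) ⊆ A }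

namespace distToIntSets

variable {C : (ℤ → ℝ) → Prop} {A B : Set ℤ}

lemma setOf_distToInt_lt_mem {P : ℤ → ℝ} (hP : C P) {ε : ℝ} (hε : 0 < ε) :
    { n | distToInt (P n) < ε } ∈ distToIntSets C :=
  ⟨1, fun _ => P, fun _ => ε, le_rfl, fun _ => hP, fun _ => hε, iInter_subset _ 0⟩

lemma exists_of_mem (hA : A ∈ distToIntSets C) : ∃ P, C P :=
  let ⟨_, P, _, hk, hP, _⟩ := hA
  ⟨P ⟨0, hk⟩, hP _⟩

lemma mono {D : (ℤ → ℝ) → Prop} (hCD : ∀ P, C P → D P) :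
    distToIntSets C ⊆ distToIntSets D :=
  fun _ ⟨k, P, ε, hk, hP, hε, hA⟩ => ⟨k, P, ε, hk, fun i => hCD _ (hP i), hε, hA⟩

lemma mem_of_superset (hA : A ∈ distToIntSets C) (hAB : A ⊆ B) : B ∈ distToIntSets C :=
  let ⟨k, P, ε, hk, hP, hε, hA⟩ := hA
  ⟨k, P, ε, hk, hP, hε, hA.trans hAB⟩

lemma inter_mem (hA : A ∈ distToIntSets C) (hB : B ∈ distToIntSets C) :
    A ∩ B ∈ distToIntSets C := by
  obtain ⟨k, P, ε, hk, hP, hε, hPA⟩ := hA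
  obtain ⟨k', P', ε', -, hP', hε', hPB⟩ := hB
  refine ⟨k + k', Fin.addCases P P', Fin.addCases ε ε', by omega,
    Fin.addCases (by simpa using hP) (by simpa using hP'),
    Fin.addCases (by simpa using hε) (by simpa using hε'), fun n hn => ⟨hPA ?_, hPB ?_⟩⟩
  all_goals
    simp only [mem_iInter, mem_ofPred_eq] at hn ⊢
    intro i
  · simpa using hn (Fin.castAdd k' i)
  · simpa using hn (Fin.natAdd k i)

def toFilter (hC : ∃ P, C P) : Filter ℤ where
  sets := distToIntSets C
  univ_sets :=
    let ⟨_, hP⟩ := hC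
    mem_of_superset (setOf_distToInt_lt_mem hP one_pos) (subset_univ _)
  sets_of_superset := mem_of_superset
  inter_sets := inter_mem

lemma iInter_mem {ι : Type*} [Finite ι] [Nonempty ι] {s : ι → Set ℤ}
    (hs : ∀ i, s i ∈ distToIntSets C) : ⋂ i, s i ∈ distToIntSets C :=
  let ⟨i⟩ := ‹Nonempty ι›
  Filter.iInter_mem (f := toFilter (exists_of_mem (hs i))) |>.2 hs

end distToIntSets

lemma FSGP_mono {e d : ℕ} (hed : e ≤ d) : FSGP e ⊆ FSGP d :=
  distToIntSets.mono fun _ hP => hP.of_le hed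

lemma SW.setOf_abs_le_mem_FGP {d : ℕ} {g : ℤ → ℝ} (hg : SW d g) {δ : ℝ} (hδ : 0 < δ)
    (hδ₁ : δ ≤ 1) : { n | |g n| ≤ δ } ∈ FGP (d - 1) := by
  obtain ⟨ℓ, r, w, hℓ, hr, hw, hrd, rfl⟩ := hg
  have : Nontrivial (Fin ℓ) := Fin.nontrivial_iff_two_le.2 hℓ
  have hr_lt (i : Fin ℓ) : r i < ∑ t, r t := by
    obtain ⟨j, hji⟩ := exists_ne i
    exact single_lt_sum hji (mem_univ i) (mem_univ j) (hr j) fun _ _ _ => Nat.zero_le _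
  refine ⟨ℓ, w, fun _ => δ, by omega, fun i => (hw i).of_le (by have := hr_lt i; omega),
    fun _ => hδ, fun n hn => ?_⟩
  simp only [mem_iInter, mem_ofPred_eq] at hn ⊢
  calc |∏ i, (w i n - nint (w i n))| = ∏ i, |w i n - nint (w i n)| := abs_prod _ _
    _ ≤ ∏ _i : Fin ℓ, δ := prod_le_prod (fun _ _ => abs_nonneg _) fun i _ =>
        (abs_sub_nint _).trans_le (hn i).le
    _ = δ ^ ℓ := by rw [prod_const, card_univ, Fintype.card_fin]
    _ ≤ δ := pow_le_of_le_one hδ.le hδ₁ (by omega)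

lemma setOf_abs_lt_mem_FGP_of_mem_Wset {d : ℕ} {h : ℤ → ℝ} (hh : h ∈ Wset d) {ε : ℝ}
    (hε : 0 < ε) : { n | |h n| < ε } ∈ FGP (d - 1) := by
  obtain ⟨m, c, g, hm, hg, rfl⟩ := hh
  set C := ∑ j, |c j|
  set δ := min 1 (ε / (C + 1))
  have hC : 0 ≤ C := by positivity
  have hδ : 0 < δ := lt_min one_pos (by positivity)
  have : Nonempty (Fin m) := ⟨⟨0, hm⟩⟩
  refine distToIntSets.mem_of_superset (distToIntSets.iInter_mem fun j =>
    (hg j).setOf_abs_le_mem_FGP hδ (min_le_left _ _)) fun n hn => ?_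
  simp only [mem_iInter, mem_ofPred_eq] at hn ⊢
  calc |∑ j, c j * g j n| ≤ ∑ j, |c j| * δ :=
        (abs_sum_le_sum_abs _ _).trans <| sum_le_sum fun j _ => by
          rw [abs_mul]; exact mul_le_mul_of_nonneg_left (hn j) (abs_nonneg _)
    _ = C * δ := by rw [sum_mul]
    _ ≤ C * (ε / (C + 1)) := mul_le_mul_of_nonneg_left (min_le_right _ _) hC
    _ < ε := by rw [mul_div_assoc', div_lt_iff₀ (by positivity)]; nlinarith

lemma GPequiv.symm {d : ℕ} {p q : ℤ → ℝ} (h : GPequiv d p q) : GPequiv d q p := by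
  obtain ⟨h₁, h₂, hh₁, ⟨m, c, g, hm, hg, rfl⟩, hint⟩ := h
  refine ⟨fun n => -1 * h₁ n, fun n => ∑ j, -c j * g j n, GP.smul (-1) hh₁,
    ⟨m, fun j => -c j, g, hm, hg, rfl⟩, fun n => ?_⟩
  obtain ⟨k, hk⟩ := hint n
  refine ⟨-k, ?_⟩
  simp only [neg_mul, sum_neg_distrib, Int.cast_neg] at hk ⊢
  linarith

lemma mem_GP'_of_GPequiv {d : ℕ} (hind : FGP (d - 1) ⊆ FSGP (d - 1)) {p q : ℤ → ℝ}
    (hq : GP d q) (hpq : GPequiv d p q) (hp : p ∈ GP' d) : q ∈ GP' d := by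
  obtain ⟨h₁, h₂, hh₁, hh₂, hint⟩ := hpq
  have hlift {A : Set ℤ} (hA : A ∈ FGP (d - 1)) : A ∈ FSGP d := FSGP_mono (d.sub_le 1) (hind hA)
  refine ⟨hq, fun ε hε => ?_⟩
  have hε3 : 0 < ε / 3 := by positivity
  have hsmall := distToIntSets.inter_mem (distToIntSets.inter_mem (hp.2 _ hε3)
    (hlift (distToIntSets.setOf_distToInt_lt_mem hh₁ hε3)))
    (hlift (setOf_abs_lt_mem_FGP_of_mem_Wset hh₂ hε3))
  refine distToIntSets.mem_of_superset hsmall ?_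
  rintro n ⟨⟨hpn, hh₁n⟩, hh₂n⟩
  obtain ⟨m, hm⟩ := hint n
  simp only [mem_ofPred_eq] at hpn hh₁n hh₂n ⊢
  calc distToInt (q n) = distToInt (p n + h₁ n + h₂ n + m) := by rw [← hm]; ring_nf
    _ = distToInt (p n + h₁ n + h₂ n) := distToInt_add_intCast _ m
    _ ≤ distToInt (p n) + distToInt (h₁ n) + |h₂ n| := by
        linarith [distToInt_add_le (p n + h₁ n) (h₂ n), distToInt_add_le (p n) (h₁ n),
          distToInt_le_abs (h₂ n)]
    _ < ε := by linarith

theorem stmt_13_general (d : ℕ) (hind : FGP (d - 1) ⊆ FSGP (d - 1))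
    (p q : ℤ → ℝ) (hp : GP d p) (hq : GP d q) (hpq : GPequiv d p q) :
    p ∈ GP' d ↔ q ∈ GP' d :=
  ⟨mem_GP'_of_GPequiv hind hq hpq, mem_GP'_of_GPequiv hind hp hpq.symm⟩

theorem stmt_13 (d : ℕ) (hd : 2 ≤ d) (hind : FGP (d - 1) ⊆ FSGP (d - 1))
    (p q : ℤ → ℝ) (hp : GP d p) (hq : GP d q) (hpq : GPequiv d p q) :
    p ∈ GP' d ↔ q ∈ GP' d :=
  stmt_13_general d hind p q hp hq hpq
end
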